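/- arXiv:2301.06467 — 4 statements merged into one kernel-verified Lean document; each statement's English description precedes it below -/
import Mathlib

section
/- A map f : X → Y between metric spaces is Lipschitz light if and only if there exists a constant c > 0 such that for every r > 0 and every r-connected subset K ⊆ X, one has c^{-1}·diam(K) − r ≤ diam(f(K)) ≤ c·diam(K). -/
open Metric Set
open scoped ENNReal NNReal

/-- `l` is an `r`-path (consecutive distances at most `r`) lying in the set `S`. -/
def IsRPathIn {X : Type*} [PseudoMetricSpace X] (r : ℝ) (S : Set X) (l : List X) : Prop :=
  (∀ z ∈ l, z ∈ S) ∧ l.Chain' (fun a b => dist a b ≤ r)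

/-- `x` and `y` lie in the same `r`-component of `S`: they are joined by an `r`-path in `S`. -/
def SameRComponent {X : Type*} [PseudoMetricSpace X] (r : ℝ) (S : Set X) (x y : X) : Prop :=
  ∃ l : List X, IsRPathIn r S l ∧ l.head? = some x ∧ l.getLast? = some y

/-- `f` is Lipschitz light with constant `C`: it is `C`-Lipschitz and, for every `r > 0` and
every `W ⊆ Y` with `diam W ≤ r`, every `r`-component of `f ⁻¹' W` has diameter at most `C * r`. -/
def LipschitzLightWith {X Y : Type*} [PseudoMetricSpace X] [PseudoMetricSpace Y]
    (C : ℝ) (f : X → Y) : Prop :=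
  (∀ x y : X, dist (f x) (f y) ≤ C * dist x y) ∧
  ∀ r : ℝ, 0 < r → ∀ W : Set Y, EMetric.diam W ≤ ENNReal.ofReal r →
    ∀ x y : X, SameRComponent r (f ⁻¹' W) x y → dist x y ≤ C * r

/-! A Lipschitz light map cannot shrink an `r`-connected set `K` much below scale `r`: at the
scale `ρ = max r (diam f(K))`, `K` is `ρ`-connected inside `f⁻¹(f(K))`, so `diam K ≤ C ρ`.
Conversely, two-point sets give the Lipschitz bound, and the lower bound applied to the
`r`-component of `f⁻¹(W)` through `x` shows that it has diameter at most `2 c r`. -/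

theorem ENNReal.ofReal_inv_mul_le_iff {c : ℝ} (hc : 0 < c) {a b : ℝ≥0∞} :
    ENNReal.ofReal c⁻¹ * a ≤ b ↔ a ≤ ENNReal.ofReal c * b := by
  rw [ENNReal.ofReal_inv_of_pos hc,
    ENNReal.inv_mul_le_iff (ENNReal.ofReal_pos.2 hc).ne' ENNReal.ofReal_ne_top]

section RComponent

variable {X : Type*} [PseudoMetricSpace X] {r : ℝ} {S T K : Set X} {l : List X} {x y z : X}

def IsRConnected (r : ℝ) (K : Set X) : Prop :=
  ∀ x ∈ K, ∀ y ∈ K, SameRComponent r K x y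

def rComponent (r : ℝ) (S : Set X) (x : X) : Set X :=
  {z | SameRComponent r S x z}

namespace SameRComponent

theorem refl (hx : x ∈ S) : SameRComponent r S x x :=
  ⟨[x], ⟨by simpa using hx, .singleton x⟩, rfl, rfl⟩

theorem symm (h : SameRComponent r S x y) : SameRComponent r S y x := by
  obtain ⟨l, ⟨hmem, hchain⟩, hhead, hlast⟩ := h
  refine ⟨l.reverse, ⟨fun z hz => hmem z (List.mem_reverse.1 hz), ?_⟩, by simpa, by simpa⟩
  exact List.isChain_reverse.2 (hchain.imp fun a b hab => by rwa [dist_comm])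

theorem mem_left (h : SameRComponent r S x y) : x ∈ S := by
  obtain ⟨l, ⟨hmem, -⟩, hhead, -⟩ := h
  exact hmem x (List.mem_of_mem_head? hhead)

theorem mem_right (h : SameRComponent r S x y) : y ∈ S :=
  h.symm.mem_left

theorem concat (h : SameRComponent r S x y) (hz : z ∈ S) (hyz : dist y z ≤ r) :
    SameRComponent r S x z := by
  obtain ⟨l, ⟨hmem, hchain⟩, hhead, hlast⟩ := h
  have hne : l ≠ [] := by rintro rfl; simp at hhead
  refine ⟨l ++ [z], ⟨?_, List.isChain_append.2 ⟨hchain, by simp, ?_⟩⟩, ?_, by simp⟩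
  · simpa [or_imp, forall_and] using ⟨hmem, hz⟩
  · simpa [hlast] using hyz
  · rwa [List.head?_append_of_ne_nil _ hne]

theorem mono {r' : ℝ} (hr : r ≤ r') (hST : S ⊆ T) (h : SameRComponent r S x y) :
    SameRComponent r' T x y := by
  obtain ⟨l, ⟨hmem, hchain⟩, hhead, hlast⟩ := h
  exact ⟨l, ⟨fun w hw => hST (hmem w hw), hchain.imp fun a b hab => hab.trans hr⟩, hhead, hlast⟩

end SameRComponent

theorem rComponent_subset : rComponent r S x ⊆ S :=
  fun _ hz => SameRComponent.mem_right hz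

theorem IsRPathIn.subset_rComponent (hl : IsRPathIn r S l) (hhead : l.head? = some y)
    (hy : y ∈ rComponent r S x) : ∀ z ∈ l, z ∈ rComponent r S x := by
  have hchain : l.IsChain fun a b => dist a b ≤ r ∧ b ∈ S :=
    hl.2.imp_of_mem_imp fun a b _ hb hab => ⟨hab, hl.1 b hb⟩
  refine hchain.induction _ _ (fun a b hab ha => SameRComponent.concat ha hab.2 hab.1) ?_
  intro hne
  rw [List.head?_eq_some_head hne, Option.some.injEq] at hhead
  rwa [hhead]

theorem SameRComponent.trans (h₁ : SameRComponent r S x y) (h₂ : SameRComponent r S y z) :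
    SameRComponent r S x z := by
  obtain ⟨l, hl, hhead, hlast⟩ := h₂
  exact hl.subset_rComponent hhead h₁ z (List.mem_of_mem_getLast? hlast)

theorem IsRConnected.mono {r' : ℝ} (hK : IsRConnected r K) (hr : r ≤ r') : IsRConnected r' K :=
  fun x hx y hy => (hK x hx y hy).mono hr subset_rfl

theorem isRConnected_pair (hxy : dist x y ≤ r) : IsRConnected r {x, y} := by
  have hx : x ∈ ({x, y} : Set X) := mem_insert x _
  have hy : y ∈ ({x, y} : Set X) := mem_insert_of_mem x rfl
  have hxy' : SameRComponent r {x, y} x y := (SameRComponent.refl hx).concat hy hxy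
  rintro u (rfl | rfl) v (rfl | rfl)
  exacts [.refl hx, hxy', hxy'.symm, .refl hy]

theorem isRConnected_rComponent : IsRConnected r (rComponent r S x) := by
  intro u hu v hv
  obtain ⟨l, hl, hhead, hlast⟩ := (SameRComponent.symm hu).trans hv
  exact ⟨l, ⟨hl.subset_rComponent hhead hu, hl.2⟩, hhead, hlast⟩

end RComponent

section LipschitzLight

variable {X Y : Type*} [PseudoMetricSpace X] [PseudoMetricSpace Y] {f : X → Y} {C c r : ℝ}
  {K : Set X}

namespace LipschitzLightWith

theorem lipschitzWith (hf : LipschitzLightWith C f) (hC : 0 ≤ C) : LipschitzWith C.toNNReal f :=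
  LipschitzWith.of_dist_le_mul fun x y => by rw [Real.coe_toNNReal _ hC]; exact hf.1 x y

theorem ediam_image_le (hf : LipschitzLightWith C f) (hC : 0 ≤ C) (K : Set X) :
    ediam (f '' K) ≤ ENNReal.ofReal C * ediam K :=
  (hf.lipschitzWith hC).ediam_image_le K

theorem ediam_le_of_isRConnected (hf : LipschitzLightWith C f) (hr : 0 < r)
    (hK : IsRConnected r K) (hfK : ediam (f '' K) ≤ ENNReal.ofReal r) :
    ediam K ≤ ENNReal.ofReal (C * r) := by
  refine ediam_le fun u hu v hv => ?_
  rw [edist_dist]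
  exact ENNReal.ofReal_le_ofReal <|
    hf.2 r hr _ hfK u v ((hK u hu v hv).mono le_rfl (subset_preimage_image f K))

theorem ediam_sub_le_ediam_image (hf : LipschitzLightWith C f) (hC : 0 < C) (hr : 0 < r)
    (hK : IsRConnected r K) :
    ENNReal.ofReal C⁻¹ * ediam K - ENNReal.ofReal r ≤ ediam (f '' K) := by
  rcases eq_or_ne (ediam (f '' K)) ⊤ with htop | htop
  · simp [htop]
  set ρ := max r (ediam (f '' K)).toReal
  have hρ : ENNReal.ofReal ρ ≤ ediam (f '' K) + ENNReal.ofReal r := by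
    rw [ENNReal.ofReal_max, ENNReal.ofReal_toReal htop]
    exact max_le le_add_self le_self_add
  have hKρ : ediam K ≤ ENNReal.ofReal (C * ρ) := by
    refine hf.ediam_le_of_isRConnected (lt_max_of_lt_left hr) (hK.mono (le_max_left _ _)) ?_
    rw [ENNReal.ofReal_max, ENNReal.ofReal_toReal htop]
    exact le_max_right _ _
  rw [tsub_le_iff_right, ENNReal.ofReal_inv_mul_le_iff hC]
  calc ediam K ≤ ENNReal.ofReal C * ENNReal.ofReal ρ := by rwa [← ENNReal.ofReal_mul hC.le]
    _ ≤ ENNReal.ofReal C * (ediam (f '' K) + ENNReal.ofReal r) := by gcongr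

end LipschitzLightWith

theorem dist_le_mul_of_ediam_image_le (hc : 0 ≤ c)
    (h : ∀ r, 0 < r → ∀ K : Set X, IsRConnected r K → ediam (f '' K) ≤ ENNReal.ofReal c * ediam K)
    (x y : X) : dist (f x) (f y) ≤ c * dist x y := by
  have := h (dist x y + 1) (by positivity) {x, y} (isRConnected_pair (by linarith))
  rwa [image_pair, ediam_pair, ediam_pair, edist_dist, edist_dist, ← ENNReal.ofReal_mul hc,
    ENNReal.ofReal_le_ofReal_iff (by positivity)] at this

theorem dist_le_of_ediam_sub_le_ediam_image (hc : 0 < c)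
    (h : ∀ r, 0 < r → ∀ K : Set X, IsRConnected r K →
      ENNReal.ofReal c⁻¹ * ediam K - ENNReal.ofReal r ≤ ediam (f '' K))
    (hr : 0 < r) {W : Set Y} (hW : ediam W ≤ ENNReal.ofReal r) {x y : X}
    (hxy : SameRComponent r (f ⁻¹' W) x y) : dist x y ≤ 2 * c * r := by
  set K := rComponent r (f ⁻¹' W) x
  have hfK : ediam (f '' K) ≤ ENNReal.ofReal r :=
    (ediam_mono (image_subset_iff.2 rComponent_subset)).trans hW
  have hK : ediam K ≤ ENNReal.ofReal (2 * c * r) := by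
    have := (h r hr K isRConnected_rComponent).trans hfK
    rw [tsub_le_iff_right, ENNReal.ofReal_inv_mul_le_iff hc, ← ENNReal.ofReal_add hr.le hr.le,
      ← ENNReal.ofReal_mul hc.le] at this
    convert this using 2
    ring
  have hxK : x ∈ K := SameRComponent.refl hxy.mem_left
  have hyK : y ∈ K := hxy
  have := (edist_le_ediam_of_mem hxK hyK).trans hK
  rwa [edist_dist, ENNReal.ofReal_le_ofReal_iff (by positivity)] at this

end LipschitzLight

/-- A map is Lipschitz light iff there is `c > 0` such that for every `r > 0` and every
`r`-connected set `K`, `c⁻¹ · diam K - r ≤ diam (f '' K) ≤ c · diam K`. -/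
theorem lipschitzLight_iff_diam_control {X Y : Type*} [MetricSpace X] [MetricSpace Y]
    (f : X → Y) :
    (∃ C : ℝ, 0 < C ∧ LipschitzLightWith C f) ↔
      ∃ c : ℝ, 0 < c ∧ ∀ r : ℝ, 0 < r → ∀ K : Set X,
        (∀ x ∈ K, ∀ y ∈ K, SameRComponent r K x y) →
          ENNReal.ofReal c⁻¹ * EMetric.diam K - ENNReal.ofReal r ≤ EMetric.diam (f '' K) ∧
            EMetric.diam (f '' K) ≤ ENNReal.ofReal c * EMetric.diam K := by
  constructor
  · rintro ⟨C, hC, hf⟩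
    exact ⟨C, hC, fun r hr K hK =>
      ⟨hf.ediam_sub_le_ediam_image hC hr hK, hf.ediam_image_le hC.le K⟩⟩
  · rintro ⟨c, hc, hcK⟩
    refine ⟨2 * c, by positivity, fun x y => ?_, fun r hr W hW x y hxy =>
      dist_le_of_ediam_sub_le_ediam_image hc (fun r hr K hK => (hcK r hr K hK).1) hr hW hxy⟩
    calc dist (f x) (f y) ≤ c * dist x y :=
          dist_le_mul_of_ediam_image_le hc.le (fun r hr K hK => (hcK r hr K hK).2) x y
      _ ≤ 2 * c * dist x y := by gcongr; linarith
end

section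
/- In the setup described in the context, suppose x, y ∈ X, s > 0, j₀ ∈ ℤ, and k ∈ {1,…,n} satisfy: (i) |f(x) − f(y)| ≤ s; (ii) d(x,y) ≤ 2c·r^{j₀}; (iii) r^{j₀ε} > 2^ε·s; and (iv) Σ_{B ∈ B^{j₀}_k} ψ_B(x) = 1. Then y ∈ ∪_{B ∈ B^{j₀}_k} B. -/
open Metric Set
open scoped ENNReal NNReal

/-- `snowPsi t B x = min {1, t * dist(x, X \\ B)}` (with the convention
`dist(x, ∅) = ∞`, so that `snowPsi t univ x = 1`). -/
noncomputable def snowPsi {X : Type*} [PseudoMetricSpace X] (t : ℝ) (B : Set X) (x : X) : ℝ :=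
  (min 1 (ENNReal.ofReal t * EMetric.infEdist x Bᶜ)).toReal

section Aux
variable {X : Type*} [MetricSpace X] {t : ℝ} {B : Set X} {x y : X}

lemma snowPsi_nonneg (t : ℝ) (B : Set X) (x : X) : 0 ≤ snowPsi t B x := ENNReal.toReal_nonneg

lemma snowPsi_le_one (t : ℝ) (B : Set X) (x : X) : snowPsi t B x ≤ 1 := by
  have h := ENNReal.toReal_mono (ENNReal.one_ne_top)
    (min_le_left 1 (ENNReal.ofReal t * EMetric.infEdist x Bᶜ))
  simpa [snowPsi] using h

lemma snowPsi_eq_zero (h : x ∉ B) : snowPsi t B x = 0 := by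
  have : EMetric.infEdist x Bᶜ = 0 := EMetric.infEdist_zero_of_mem h
  simp [snowPsi, this]

lemma snowPsi_le_add (ht : 0 ≤ t) (B : Set X) (x y : X) :
    snowPsi t B x ≤ snowPsi t B y + t * dist x y := by
  set T := ENNReal.ofReal t with hT
  set Ex := EMetric.infEdist x Bᶜ
  set Ey := EMetric.infEdist y Bᶜ
  have key : min 1 (T * Ex) ≤ min 1 (T * Ey) + T * edist x y := by
    have h1 : T * Ex ≤ T * Ey + T * edist x y := by
      rw [← mul_add]
      exact mul_le_mul_right EMetric.infEdist_le_infEdist_add_edist T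
    have : min 1 (T * Ex) ≤ min (1 + T * edist x y) (T * Ey + T * edist x y) := by
      refine le_min (le_trans (min_le_left _ _) le_self_add) (le_trans (min_le_right _ _) h1)
    simpa [min_add_add_right] using this
  have hne : min 1 (T * Ey) + T * edist x y ≠ ⊤ := by
    refine ENNReal.add_ne_top.2 ⟨?_, ?_⟩
    · exact ne_top_of_le_ne_top ENNReal.one_ne_top (min_le_left _ _)
    · exact ENNReal.mul_ne_top ENNReal.ofReal_ne_top (edist_ne_top x y)
  have h2 := ENNReal.toReal_mono hne key
  rw [ENNReal.toReal_add (ne_top_of_le_ne_top ENNReal.one_ne_top (min_le_left _ _))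
    (ENNReal.mul_ne_top ENNReal.ofReal_ne_top (edist_ne_top x y))] at h2
  have h3 : (T * edist x y).toReal = t * dist x y := by
    rw [ENNReal.toReal_mul, hT, ENNReal.toReal_ofReal ht, dist_edist]
  rw [h3] at h2
  exact h2

lemma abs_snowPsi_sub_le (ht : 0 ≤ t) (B : Set X) (x y : X) :
    |snowPsi t B x - snowPsi t B y| ≤ t * dist x y := by
  rw [abs_sub_le_iff]
  constructor
  · linarith [snowPsi_le_add ht B x y]
  · have := snowPsi_le_add ht B y x
    rw [dist_comm] at this; linarith

end Aux

section Fam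
variable {X : Type*} [MetricSpace X] {t : ℝ} {F : Set (Set X)} {x y : X}

lemma tsum_snowPsi_of_not_mem (h : ∀ B ∈ F, x ∉ B) :
    ∑' B : F, snowPsi t (B : Set X) x = 0 := by
  have : ∀ B : F, snowPsi t (B : Set X) x = 0 := fun B => snowPsi_eq_zero (h B B.2)
  simp [this]

lemma tsum_snowPsi_of_mem {B₀ : Set X} (hB : B₀ ∈ F)
    (hd : {B ∈ F | x ∈ B}.Subsingleton) (hx : x ∈ B₀) :
    ∑' B : F, snowPsi t (B : Set X) x = snowPsi t B₀ x := by
  refine tsum_eq_single (⟨B₀, hB⟩ : F) ?_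
  rintro ⟨B, hBF⟩ hne
  refine snowPsi_eq_zero (fun hxB => ?_)
  exact hne (Subtype.ext (hd ⟨hBF, hxB⟩ ⟨hB, hx⟩))

lemma abs_tsum_snowPsi_sub_le (ht : 0 ≤ t)
    (hdx : {B ∈ F | x ∈ B}.Subsingleton) (hdy : {B ∈ F | y ∈ B}.Subsingleton) :
    |(∑' B : F, snowPsi t (B : Set X) x) - ∑' B : F, snowPsi t (B : Set X) y|
      ≤ min 1 (t * dist x y) := by
  by_cases hx : ∃ B₀ ∈ F, x ∈ B₀
  · obtain ⟨Bx, hBx, hxBx⟩ := hx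
    rw [tsum_snowPsi_of_mem hBx hdx hxBx]
    by_cases hy : ∃ B₀ ∈ F, y ∈ B₀
    · obtain ⟨By, hBy, hyBy⟩ := hy
      rw [tsum_snowPsi_of_mem hBy hdy hyBy]
      by_cases hBeq : Bx = By
      · subst hBeq
        refine le_min ?_ (abs_snowPsi_sub_le ht Bx x y)
        rw [abs_sub_le_iff]
        constructor
        · linarith [snowPsi_le_one t Bx x, snowPsi_nonneg t Bx y]
        · linarith [snowPsi_le_one t Bx y, snowPsi_nonneg t Bx x]
      · have hyBx : y ∉ Bx := fun hyBx => hBeq (hdy ⟨hBx, hyBx⟩ ⟨hBy, hyBy⟩)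
        have hxBy : x ∉ By := fun hxBy => hBeq (hdx ⟨hBx, hxBx⟩ ⟨hBy, hxBy⟩)
        have ha : snowPsi t Bx x ≤ min 1 (t * dist x y) := by
          refine le_min (snowPsi_le_one t Bx x) ?_
          have := snowPsi_le_add ht Bx x y
          rw [snowPsi_eq_zero hyBx] at this; linarith
        have hb : snowPsi t By y ≤ min 1 (t * dist x y) := by
          refine le_min (snowPsi_le_one t By y) ?_
          have := snowPsi_le_add ht By y x
          rw [snowPsi_eq_zero hxBy, dist_comm] at this; linarith
        rw [abs_sub_le_iff]
        exact ⟨by linarith [snowPsi_nonneg t By y], by linarith [snowPsi_nonneg t Bx x]⟩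
    · push_neg at hy
      rw [tsum_snowPsi_of_not_mem hy, sub_zero]
      have hyBx : y ∉ Bx := hy Bx hBx
      rw [abs_of_nonneg (snowPsi_nonneg t Bx x)]
      refine le_min (snowPsi_le_one t Bx x) ?_
      have := snowPsi_le_add ht Bx x y
      rw [snowPsi_eq_zero hyBx] at this; linarith
  · push_neg at hx
    rw [tsum_snowPsi_of_not_mem hx, zero_sub, abs_neg]
    by_cases hy : ∃ B₀ ∈ F, y ∈ B₀
    · obtain ⟨By, hBy, hyBy⟩ := hy
      rw [tsum_snowPsi_of_mem hBy hdy hyBy]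
      have hxBy : x ∉ By := hx By hBy
      rw [abs_of_nonneg (snowPsi_nonneg t By y)]
      refine le_min (snowPsi_le_one t By y) ?_
      have := snowPsi_le_add ht By y x
      rw [snowPsi_eq_zero hxBy, dist_comm] at this; linarith
    · push_neg at hy
      rw [tsum_snowPsi_of_not_mem hy, abs_zero]
      exact le_min zero_le_one (by positivity)
end Fam

lemma myOB_norm_one {n : ℕ} (b : OrthonormalBasis (Fin n) ℝ (EuclideanSpace ℝ (Fin n)))
    (i : Fin n) : ‖b i‖ = 1 := by
  have h := orthonormal_iff_ite.mp b.orthonormal i i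
  simp only [if_true, eq_self_iff_true] at h
  have h2 := real_inner_self_eq_norm_sq (b i)
  nlinarith [norm_nonneg (b i)]

lemma hasSum_snow_bound (r ε c : ℝ) (hr : 1 < r) (hε0 : 0 < ε) (hε1 : ε < 1)
    (j₀ : ℤ) :
    HasSum (fun j : ℤ => if j < j₀ then r ^ ((j : ℝ) * ε)
        else if j = j₀ then 0 else (2 * c * r ^ ((j₀ : ℝ))) * r ^ ((j : ℝ) * (ε - 1)))
      (2 * c * r ^ ((j₀ : ℝ) * ε) / (r ^ (1 - ε) - 1)
        + r ^ ((j₀ : ℝ) * ε) / (r ^ ε - 1)) := by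
  have hr0 : (0 : ℝ) < r := lt_trans one_pos hr
  set v : ℤ → ℝ := fun j => if j < j₀ then r ^ ((j : ℝ) * ε)
        else if j = j₀ then 0 else (2 * c * r ^ ((j₀ : ℝ))) * r ^ ((j : ℝ) * (ε - 1)) with hv
  set P : ℝ := r ^ ((j₀ : ℝ) * ε) with hP
  set q1 : ℝ := r ^ (-ε) with hq1
  set q2 : ℝ := r ^ (ε - 1) with hq2
  have hq1nn : 0 ≤ q1 := Real.rpow_nonneg hr0.le _
  have hq2nn : 0 ≤ q2 := Real.rpow_nonneg hr0.le _
  have hq1lt : q1 < 1 := Real.rpow_lt_one_of_one_lt_of_neg hr (by linarith)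
  have hq2lt : q2 < 1 := Real.rpow_lt_one_of_one_lt_of_neg hr (by linarith)
  set C : ℝ := 2 * c * P with hC
  have hneg : HasSum (fun m : ℕ => v (-(↑m + 1) + j₀)) (P * q1 * (1 - q1)⁻¹) := by
    have hgeom := (hasSum_geometric_of_lt_one hq1nn hq1lt).mul_left (P * q1)
    refine hgeom.congr_fun fun m => ?_
    have hlt : -(↑m + 1) + j₀ < j₀ := by omega
    rw [hv]; simp only [hlt, if_pos]
    have h1 : q1 ^ m = r ^ (-ε * (m : ℝ)) := by
      rw [hq1, ← Real.rpow_natCast (r ^ (-ε)) m, ← Real.rpow_mul hr0.le]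
    rw [h1, hP, hq1, ← Real.rpow_add hr0, ← Real.rpow_add hr0]
    congr 1
    push_cast
    ring
  have hpos : HasSum (fun m : ℕ => v (↑m + j₀)) (C * (1 - q2)⁻¹ - C) := by
    have hgeom := ((hasSum_geometric_of_lt_one hq2nn hq2lt).mul_left C).sub
      (hasSum_ite_eq (0 : ℕ) C)
    refine hgeom.congr_fun fun m => ?_
    match m with
    | 0 => simp [hv]
    | (m + 1) =>
      have hlt : ¬ ((↑(m + 1) : ℤ) + j₀ < j₀) := by omega
      have hne : ((↑(m + 1) : ℤ) + j₀) ≠ j₀ := by omega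
      rw [hv]
      simp only [hlt, if_false, hne, if_false, Nat.succ_ne_zero, sub_zero]
      have h1 : q2 ^ (m + 1) = r ^ ((ε - 1) * ((m : ℝ) + 1)) := by
        rw [hq2, ← Real.rpow_natCast (r ^ (ε - 1)) (m + 1), ← Real.rpow_mul hr0.le]
        push_cast; ring_nf
      rw [h1, hC, hP, mul_assoc (2 * c), ← Real.rpow_add hr0, mul_assoc (2 * c),
        ← Real.rpow_add hr0]
      congr 2
      push_cast
      ring
  have htotal : HasSum (fun j : ℤ => v (j + j₀)) ((C * (1 - q2)⁻¹ - C) + P * q1 * (1 - q1)⁻¹) :=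
    HasSum.of_nat_of_neg_add_one hpos hneg
  have hvsum : HasSum v ((C * (1 - q2)⁻¹ - C) + P * q1 * (1 - q1)⁻¹) :=
    ((Equiv.addRight j₀).hasSum_iff (f := v)).mp htotal
  convert hvsum using 1
  have hE1 : (1 : ℝ) < r ^ ε := Real.one_lt_rpow_iff_of_pos hr0 |>.2 (Or.inl ⟨hr, hε0⟩)
  have hE2 : (1 : ℝ) < r ^ (1 - ε) :=
    Real.one_lt_rpow_iff_of_pos hr0 |>.2 (Or.inl ⟨hr, by linarith⟩)
  have hq1e : q1 = (r ^ ε)⁻¹ := by rw [hq1, ← Real.rpow_neg hr0.le]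
  have hq2e : q2 = (r ^ (1 - ε))⁻¹ := by
    rw [hq2, ← Real.rpow_neg hr0.le]; congr 1; ring
  rw [hq1e, hq2e, hC]
  have h10 : r ^ ε ≠ 0 := by positivity
  have h20 : r ^ (1 - ε) ≠ 0 := by positivity
  have h11 : r ^ ε - 1 ≠ 0 := by linarith
  have h21 : r ^ (1 - ε) - 1 ≠ 0 := by linarith
  field_simp
  ring_nf

set_option maxHeartbeats 1000000 in
/-- The key technical lemma: under the stated conditions on `x`, `y`, `s`, `j₀` and a color
`k ≠ 0`, the point `y` lies in some member of the family `𝓑 j₀ k`. -/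
theorem key_color_lemma (X : Type*) [MetricSpace X] (n : ℕ) (ε : ℝ) (hε0 : 0 < ε)
    (hε1 : ε < 1) (c : ℝ) (hc : 1 ≤ c) (r : ℝ) (hr : 1 < r)
    (hrsep : 2 / (r ^ ε - 1) + 4 * c / (r ^ (1 - ε) - 1) < 1 - 2 ^ (-ε))
    (𝓑 : ℤ → Fin (n + 1) → Set (Set X))
    (hopen : ∀ (j : ℤ) (k : Fin (n + 1)), ∀ B ∈ 𝓑 j k, IsOpen B)
    (hdiam : ∀ (j : ℤ) (k : Fin (n + 1)), ∀ B ∈ 𝓑 j k,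
        EMetric.diam B ≤ ENNReal.ofReal (c * r ^ j))
    (hdisj : ∀ (j : ℤ) (k : Fin (n + 1)) (x : X), {B ∈ 𝓑 j k | x ∈ B}.Subsingleton)
    (e : Fin (n + 1) → EuclideanSpace ℝ (Fin n)) (he0 : e 0 = 0)
    (b : OrthonormalBasis (Fin n) ℝ (EuclideanSpace ℝ (Fin n)))
    (heb : ∀ i : Fin n, e i.succ = b i)
    (φ : ℤ → X → EuclideanSpace ℝ (Fin n))
    (hφ : ∀ (j : ℤ) (x : X), φ j x = ∑ k : Fin (n + 1),
        (∑' B : 𝓑 j k, snowPsi (r ^ (-j)) (B : Set X) x) • e k)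
    (x₀ : X)
    (hconv : ∀ x : X, Summable (fun j : ℤ => ‖(r ^ ((j : ℝ) * ε)) • (φ j x - φ j x₀)‖))
    (f : X → EuclideanSpace ℝ (Fin n))
    (hf : ∀ x, f x = ∑' j : ℤ, (r ^ ((j : ℝ) * ε)) • (φ j x - φ j x₀))
    (x y : X) (s : ℝ) (hs : 0 < s) (j₀ : ℤ) (k : Fin (n + 1)) (hk : k ≠ 0)
    (h1 : ‖f x - f y‖ ≤ s)
    (h2 : dist x y ≤ 2 * c * r ^ j₀)
    (h3 : 2 ^ ε * s < r ^ ((j₀ : ℝ) * ε))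
    (h4 : (∑' B : 𝓑 j₀ k, snowPsi (r ^ (-j₀)) (B : Set X) x) = 1) :
    ∃ B ∈ 𝓑 j₀ k, y ∈ B := by
  by_contra hcon
  push_neg at hcon
  have hr0 : (0 : ℝ) < r := lt_trans one_pos hr
  obtain ⟨i, hki⟩ : ∃ i : Fin n, k = i.succ := by
    rcases Fin.eq_zero_or_eq_succ k with h | h
    · exact absurd h hk
    · exact h
  -- the scalar sums
  set T : ℤ → X → ℝ := fun j z => ∑' B : 𝓑 j k, snowPsi (r ^ (-j)) (B : Set X) z with hTdef
  -- the coordinate lemma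
  have hcoord : ∀ (j : ℤ) (z : X), (inner ℝ (b i) (φ j z) : ℝ) = T j z := by
    intro j z
    rw [hφ j z, inner_sum]
    rw [Finset.sum_eq_single k]
    · have hek : e k = b i := by rw [hki, heb]
      have h11 : (inner ℝ (b i) (b i) : ℝ) = 1 := by
        have h := orthonormal_iff_ite.mp b.orthonormal i i
        simpa using h
      rw [real_inner_smul_right, hek, h11, mul_one]
    · intro k' _ hne
      rcases Fin.eq_zero_or_eq_succ k' with h0 | ⟨m, hm⟩
      · rw [h0, he0, smul_zero, inner_zero_right]
      · rw [real_inner_smul_right, hm, heb m]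
        have hmi : i ≠ m := by
          intro hh
          exact hne (by rw [hm, hki, hh])
        have := orthonormal_iff_ite.mp b.orthonormal i m
        rw [if_neg hmi] at this
        rw [this, mul_zero]
    · intro hnk
      exact absurd (Finset.mem_univ k) hnk
  -- summability
  have hsx : Summable (fun j : ℤ => (r ^ ((j : ℝ) * ε)) • (φ j x - φ j x₀)) := (hconv x).of_norm
  have hsy : Summable (fun j : ℤ => (r ^ ((j : ℝ) * ε)) • (φ j y - φ j x₀)) := (hconv y).of_norm
  have hsxy : Summable (fun j : ℤ => (r ^ ((j : ℝ) * ε)) • (φ j x - φ j y)) := by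
    refine (hsx.sub hsy).congr fun j => ?_
    rw [← smul_sub]
    congr 1
    abel
  have hfd : f x - f y = ∑' j : ℤ, (r ^ ((j : ℝ) * ε)) • (φ j x - φ j y) := by
    rw [hf x, hf y, ← Summable.tsum_sub hsx hsy]
    refine tsum_congr fun j => ?_
    rw [← smul_sub]
    congr 1
    abel
  -- inner product expansion
  set L := innerSL ℝ (b i) with hL
  set u : ℤ → ℝ := fun j => (r ^ ((j : ℝ) * ε)) * (T j x - T j y) with hu
  have hterm : ∀ j : ℤ, L ((r ^ ((j : ℝ) * ε)) • (φ j x - φ j y)) = u j := by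
    intro j
    rw [hL, map_smul, map_sub, smul_eq_mul, hu]
    simp only [innerSL_apply_apply]
    rw [hcoord j x, hcoord j y]
  have hinner : (inner ℝ (b i) (f x - f y) : ℝ) = ∑' j : ℤ, u j := by
    have h0 : (inner ℝ (b i) (f x - f y) : ℝ) = L (f x - f y) := by rw [hL, innerSL_apply_apply]
    rw [h0, hfd, L.map_tsum hsxy]
    exact tsum_congr hterm
  have husum : Summable u := by
    refine (hsxy.map L L.continuous).congr fun j => ?_
    exact hterm j
  -- values at j₀
  set P : ℝ := r ^ ((j₀ : ℝ) * ε) with hP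
  have hP0 : 0 < P := Real.rpow_pos_of_pos hr0 _
  have hTy0 : T j₀ y = 0 := tsum_snowPsi_of_not_mem hcon
  have hTx1 : T j₀ x = 1 := h4
  have huj₀ : u j₀ = P := by
    have hueq : u j₀ = r ^ ((j₀ : ℝ) * ε) * (T j₀ x - T j₀ y) := rfl
    rw [hueq, hTx1, hTy0, hP]
    ring
  -- split off j₀
  have hsplit := Summable.tsum_eq_add_tsum_ite husum j₀
  set W : ℝ := ∑' j : ℤ, if j = j₀ then 0 else u j with hW
  -- the bounding series
  set v : ℤ → ℝ := fun j => if j < j₀ then r ^ ((j : ℝ) * ε)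
      else if j = j₀ then 0 else (2 * c * r ^ ((j₀ : ℝ))) * r ^ ((j : ℝ) * (ε - 1)) with hv
  have hvsum := hasSum_snow_bound r ε c hr hε0 hε1 j₀
  set R : ℝ := 2 * c * r ^ ((j₀ : ℝ) * ε) / (r ^ (1 - ε) - 1)
      + r ^ ((j₀ : ℝ) * ε) / (r ^ ε - 1) with hR
  -- pointwise bound
  have hzpow_rpow : ∀ j : ℤ, (r : ℝ) ^ j = r ^ ((j : ℝ)) := fun j => (Real.rpow_intCast r j).symm
  have hle : ∀ j : ℤ, |if j = j₀ then 0 else u j| ≤ v j := by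
    intro j
    by_cases hj : j = j₀
    · subst hj
      simp [hv]
    · rw [if_neg hj]
      simp only [hv]
      have ht0 : (0 : ℝ) ≤ r ^ (-j) := le_of_lt (zpow_pos hr0 _)
      have habs : |T j x - T j y| ≤ min 1 ((r ^ (-j) : ℝ) * dist x y) := by
        rw [hTdef]
        exact abs_tsum_snowPsi_sub_le ht0 (hdisj j k x) (hdisj j k y)
      have hrp : (0 : ℝ) < r ^ ((j : ℝ) * ε) := Real.rpow_pos_of_pos hr0 _
      have habs2 : |u j| ≤ r ^ ((j : ℝ) * ε) * min 1 ((r ^ (-j) : ℝ) * dist x y) := by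
        rw [hu]
        rw [abs_mul, abs_of_pos hrp]
        exact mul_le_mul_of_nonneg_left habs hrp.le
      rcases lt_or_gt_of_ne hj with hlt | hgt
      · rw [if_pos hlt]
        calc |u j| ≤ r ^ ((j : ℝ) * ε) * min 1 ((r ^ (-j) : ℝ) * dist x y) := habs2
          _ ≤ r ^ ((j : ℝ) * ε) * 1 := by
              exact mul_le_mul_of_nonneg_left (min_le_left _ _) hrp.le
          _ = r ^ ((j : ℝ) * ε) := mul_one _
      · rw [if_neg (not_lt_of_gt hgt), if_neg hj]
        have hd0 : (0 : ℝ) ≤ dist x y := dist_nonneg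
        calc |u j| ≤ r ^ ((j : ℝ) * ε) * min 1 ((r ^ (-j) : ℝ) * dist x y) := habs2
          _ ≤ r ^ ((j : ℝ) * ε) * ((r ^ (-j) : ℝ) * dist x y) :=
              mul_le_mul_of_nonneg_left (min_le_right _ _) hrp.le
          _ ≤ r ^ ((j : ℝ) * ε) * ((r ^ (-j) : ℝ) * (2 * c * r ^ j₀)) := by
              refine mul_le_mul_of_nonneg_left ?_ hrp.le
              exact mul_le_mul_of_nonneg_left h2 ht0
          _ = (2 * c * r ^ ((j₀ : ℝ))) * r ^ ((j : ℝ) * (ε - 1)) := by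
              rw [hzpow_rpow (-j), hzpow_rpow j₀]
              rw [show ((-j : ℤ) : ℝ) = -(j : ℝ) by push_cast; ring]
              rw [show ((j : ℝ) * (ε - 1)) = (j : ℝ) * ε + (-(j : ℝ)) by ring,
                Real.rpow_add hr0]
              ring
  have habsum : Summable (fun j : ℤ => |if j = j₀ then 0 else u j|) :=
    Summable.of_nonneg_of_le (fun j => abs_nonneg _) hle hvsum.summable
  have hWle : |W| ≤ R := by
    calc |W| ≤ ∑' j : ℤ, |if j = j₀ then 0 else u j| := by
          rw [hW]
          have habs' : Summable (fun j : ℤ => ‖if j = j₀ then 0 else u j‖) := by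
            simpa only [Real.norm_eq_abs] using habsum
          simpa only [Real.norm_eq_abs] using norm_tsum_le_tsum_norm habs'
      _ ≤ ∑' j : ℤ, v j := Summable.tsum_le_tsum hle habsum hvsum.summable
      _ = R := hvsum.tsum_eq
  -- upper bound from h1
  have hbn : ‖b i‖ = 1 := myOB_norm_one b i
  have hup : |(inner ℝ (b i) (f x - f y) : ℝ)| ≤ s := by
    calc |(inner ℝ (b i) (f x - f y) : ℝ)| ≤ ‖b i‖ * ‖f x - f y‖ := abs_real_inner_le_norm _ _
      _ = ‖f x - f y‖ := by rw [hbn, one_mul]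
      _ ≤ s := h1
  -- lower bound
  have hlow : P - R ≤ |(inner ℝ (b i) (f x - f y) : ℝ)| := by
    rw [hinner, hsplit, huj₀]
    have h5 : P ≤ |P + W| + |W| := by
      have h6 := abs_add_le (P + W) (-W)
      rw [abs_neg] at h6
      have h7 : P + W + -W = P := by ring
      rw [h7, abs_of_pos hP0] at h6
      exact h6
    linarith [hWle]
  -- the numeric contradiction
  have hE1 : (1 : ℝ) < r ^ ε := Real.one_lt_rpow_iff_of_pos hr0 |>.2 (Or.inl ⟨hr, hε0⟩)
  have hE2 : (1 : ℝ) < r ^ (1 - ε) :=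
    Real.one_lt_rpow_iff_of_pos hr0 |>.2 (Or.inl ⟨hr, by linarith⟩)
  have hc0 : (0 : ℝ) < c := lt_of_lt_of_le one_pos hc
  have hd1 : (0 : ℝ) < r ^ ε - 1 := by linarith
  have hd2 : (0 : ℝ) < r ^ (1 - ε) - 1 := by linarith
  rw [← hP] at hR
  have hRle : R ≤ (2 / (r ^ ε - 1) + 4 * c / (r ^ (1 - ε) - 1)) * P := by
    have e1 : P / (r ^ ε - 1) ≤ 2 * P / (r ^ ε - 1) :=
      (div_le_div_iff_of_pos_right hd1).mpr (by linarith)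
    have e2 : 2 * c * P / (r ^ (1 - ε) - 1) ≤ 4 * c * P / (r ^ (1 - ε) - 1) :=
      (div_le_div_iff_of_pos_right hd2).mpr (by linarith [mul_nonneg hc0.le hP0.le])
    calc R = 2 * c * P / (r ^ (1 - ε) - 1) + P / (r ^ ε - 1) := hR
      _ ≤ 4 * c * P / (r ^ (1 - ε) - 1) + 2 * P / (r ^ ε - 1) := add_le_add e2 e1
      _ = (2 / (r ^ ε - 1) + 4 * c / (r ^ (1 - ε) - 1)) * P := by ring
  have hmul : (2 / (r ^ ε - 1) + 4 * c / (r ^ (1 - ε) - 1)) * P < (1 - 2 ^ (-ε)) * P :=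
    mul_lt_mul_of_pos_right hrsep hP0
  have h2e : (0 : ℝ) < 2 ^ ε := Real.rpow_pos_of_pos two_pos _
  have h2eneg : (2 : ℝ) ^ (-ε) = (2 ^ ε)⁻¹ := by
    rw [← Real.rpow_neg (by norm_num : (0:ℝ) ≤ 2)]
  have hsP : s < 2 ^ (-ε) * P := by
    rw [h2eneg]
    rw [inv_mul_eq_div, lt_div_iff₀ h2e]
    calc s * 2 ^ ε = 2 ^ ε * s := by ring
      _ < P := h3
  have hA : P - R ≤ s := le_trans hlow hup
  have hB : R < (1 - 2 ^ (-ε)) * P := lt_of_le_of_lt hRle hmul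
  have hC : (1 - 2 ^ (-ε)) * P = P - 2 ^ (-ε) * P := by ring
  linarith only [hA, hB, hC, hsP]
end

section
/- Let X be a compact, bounded turning metric space with metric d, Y a metric space, and f : X → Y a non-constant branched quasisymmetry. Then the pullback distance d_f is a metric on X, and the identity map from (X,d) to (X,d_f) is a homeomorphism (the two metrics are topologically equivalent). -/
open Metric Set
open scoped ENNReal NNReal

/-- A continuum: a nonempty compact connected set. -/
def IsContinuum {X : Type*} [TopologicalSpace X] (K : Set X) : Prop :=
  IsCompact K ∧ IsConnected K

/-- `X` is `C`-bounded turning: every pair of points lies in a continuum of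
diameter at most `C` times their distance. -/
def BoundedTurningWith (X : Type*) [PseudoMetricSpace X] (C : ℝ) : Prop :=
  ∀ x y : X, ∃ K : Set X, IsContinuum K ∧ x ∈ K ∧ y ∈ K ∧ Metric.diam K ≤ C * dist x y

/-- `η` is a (necessarily increasing) homeomorphism of `[0,∞)` onto itself. -/
def IsQSControl (η : ℝ → ℝ) : Prop :=
  ContinuousOn η (Set.Ici 0) ∧ StrictMonoOn η (Set.Ici 0) ∧
    Set.MapsTo η (Set.Ici 0) (Set.Ici 0) ∧ Set.SurjOn η (Set.Ici 0) (Set.Ici 0)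

/-- `f` is a branched quasisymmetry with control homeomorphism `η`:
`f` is continuous and distorts ratios of diameters of intersecting
non-trivial continua in a manner controlled by `η`. -/
def BranchedQS {X Y : Type*} [PseudoMetricSpace X] [PseudoMetricSpace Y]
    (η : ℝ → ℝ) (f : X → Y) : Prop :=
  Continuous f ∧ IsQSControl η ∧
    ∀ E E' : Set X, IsContinuum E → IsContinuum E' → E.Nontrivial → E'.Nontrivial →
      (E ∩ E').Nonempty →
        Metric.diam (f '' E) ≤ η (Metric.diam E / Metric.diam E') * Metric.diam (f '' E')

/-- The Guo–Williams pullback distance associated to `f`: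
`d_f(x,y) = inf {diam (f '' K) : K a continuum containing x and y}`. -/
noncomputable def pullbackDist {X Y : Type*} [TopologicalSpace X] [PseudoMetricSpace Y]
    (f : X → Y) (x y : X) : ℝ :=
  sInf {t : ℝ | ∃ K : Set X, IsContinuum K ∧ x ∈ K ∧ y ∈ K ∧ t = Metric.diam (f '' K)}

/-!
Continua through a common point can be concatenated, which gives the triangle inequality, and
bounded turning joins nearby points by a small continuum `K`, so `d_f(x, y) ≤ diam f(K)` is small.
Conversely, fix `p, q` with `f p ≠ f q`. A continuum `K` through `a` and `z` meets a continuum `M`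
through `z`, `p` and `q`, so branched quasisymmetry gives
`dist (f p) (f q) ≤ diam f(M) ≤ η (diam X / dist a z) * diam f(K)`:
`d_f(a, z)` is bounded below in terms of `dist a z` alone.
-/

open Filter Topology

def ContinuumConnected (X : Type*) [TopologicalSpace X] : Prop :=
  ∀ x y : X, ∃ K : Set X, IsContinuum K ∧ x ∈ K ∧ y ∈ K

lemma BoundedTurningWith.continuumConnected {X : Type*} [PseudoMetricSpace X] {C : ℝ}
    (h : BoundedTurningWith X C) : ContinuumConnected X := fun x y =>
  let ⟨K, hK, hx, hy, _⟩ := h x y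
  ⟨K, hK, hx, hy⟩

section IsContinuum

variable {X : Type*} [TopologicalSpace X] {K L : Set X}

lemma isContinuum_singleton (x : X) : IsContinuum {x} :=
  ⟨isCompact_singleton, isConnected_singleton⟩

lemma IsContinuum.union (hK : IsContinuum K) (hL : IsContinuum L) (h : (K ∩ L).Nonempty) :
    IsContinuum (K ∪ L) :=
  ⟨hK.1.union hL.1, hK.2.union h hL.2⟩

lemma ContinuumConnected.exists_isContinuum_mem₃ (hX : ContinuumConnected X) (x y z : X) :
    ∃ K : Set X, IsContinuum K ∧ x ∈ K ∧ y ∈ K ∧ z ∈ K := by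
  obtain ⟨K, hK, hxK, hyK⟩ := hX x y
  obtain ⟨L, hL, hyL, hzL⟩ := hX y z
  exact ⟨K ∪ L, hK.union hL ⟨y, hyK, hyL⟩, .inl hxK, .inl hyK, .inr hzL⟩

end IsContinuum

section PullbackDist

variable {X Y : Type*} [TopologicalSpace X] [PseudoMetricSpace Y] {f : X → Y} {x y : X}
  {K : Set X}

lemma pullbackDist_nonneg (f : X → Y) (x y : X) : 0 ≤ pullbackDist f x y :=
  Real.sInf_nonneg <| by rintro _ ⟨K, -, -, -, rfl⟩; exact diam_nonneg

lemma pullbackDist_le_diam_image (hK : IsContinuum K) (hx : x ∈ K) (hy : y ∈ K) :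
    pullbackDist f x y ≤ diam (f '' K) :=
  csInf_le ⟨0, by rintro _ ⟨K, -, -, -, rfl⟩; exact diam_nonneg⟩ ⟨K, hK, hx, hy, rfl⟩

lemma le_pullbackDist {c : ℝ} (hxy : ∃ K : Set X, IsContinuum K ∧ x ∈ K ∧ y ∈ K)
    (h : ∀ K : Set X, IsContinuum K → x ∈ K → y ∈ K → c ≤ diam (f '' K)) :
    c ≤ pullbackDist f x y := by
  obtain ⟨K, hK, hx, hy⟩ := hxy
  exact le_csInf ⟨_, K, hK, hx, hy, rfl⟩ fun _ ⟨K, hK, hx, hy, hc⟩ => hc ▸ h K hK hx hy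

lemma pullbackDist_self (f : X → Y) (x : X) : pullbackDist f x x = 0 := by
  refine le_antisymm ?_ (pullbackDist_nonneg f x x)
  simpa using pullbackDist_le_diam_image (f := f) (isContinuum_singleton x) rfl rfl

lemma pullbackDist_comm (f : X → Y) (x y : X) : pullbackDist f x y = pullbackDist f y x := by
  simp only [pullbackDist, and_left_comm (a := x ∈ _)]

lemma pullbackDist_triangle (hX : ContinuumConnected X) (f : X → Y) (x y z : X) :
    pullbackDist f x z ≤ pullbackDist f x y + pullbackDist f y z := by
  have h_union : ∀ K L : Set X, IsContinuum K → x ∈ K → y ∈ K → IsContinuum L → y ∈ L → z ∈ L →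
      pullbackDist f x z ≤ diam (f '' K) + diam (f '' L) := by
    intro K L hK hxK hyK hL hyL hzL
    calc pullbackDist f x z ≤ diam (f '' (K ∪ L)) :=
          pullbackDist_le_diam_image (hK.union hL ⟨y, hyK, hyL⟩) (.inl hxK) (.inr hzL)
      _ ≤ diam (f '' K) + diam (f '' L) := by
          rw [image_union]
          exact diam_union' ⟨f y, mem_image_of_mem f hyK, mem_image_of_mem f hyL⟩
  have h_left : pullbackDist f x z - pullbackDist f y z ≤ pullbackDist f x y :=
    le_pullbackDist (hX x y) fun K hK hxK hyK => by
      have : pullbackDist f x z - diam (f '' K) ≤ pullbackDist f y z :=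
        le_pullbackDist (hX y z) fun L hL hyL hzL => by
          linarith [h_union K L hK hxK hyK hL hyL hzL]
      linarith
  linarith

end PullbackDist

lemma tendsto_diam_image_of_tendsto_diam {ι X Y : Type*} [PseudoMetricSpace X]
    [PseudoMetricSpace Y] {f : X → Y} {p : X} (hf : ContinuousAt f p) {l : Filter ι}
    {K : ι → Set X} (hp : ∀ i, p ∈ K i) (hb : ∀ i, Bornology.IsBounded (K i))
    (hK : Tendsto (fun i => diam (K i)) l (𝓝 0)) :
    Tendsto (fun i => diam (f '' K i)) l (𝓝 0) := by
  refine Metric.tendsto_nhds.2 fun ε hε => ?_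
  obtain ⟨δ, hδ, hfδ⟩ := Metric.continuousAt_iff.1 hf (ε / 3) (by positivity)
  filter_upwards [Metric.tendsto_nhds.1 hK δ hδ] with i hi
  rw [Real.dist_0_eq_abs, abs_of_nonneg diam_nonneg] at hi ⊢
  have h_sub : f '' K i ⊆ closedBall (f p) (ε / 3) := by
    rintro _ ⟨x, hx, rfl⟩
    exact (hfδ ((dist_le_diam_of_mem (hb i) hx (hp i)).trans_lt hi)).le
  calc diam (f '' K i) ≤ diam (closedBall (f p) (ε / 3)) := diam_mono h_sub isBounded_closedBall
    _ ≤ 2 * (ε / 3) := diam_closedBall (by positivity)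
    _ < ε := by linarith

lemma tendsto_pullbackDist_of_tendsto {ι X Y : Type*} [PseudoMetricSpace X]
    [PseudoMetricSpace Y] {C : ℝ} (hbt : BoundedTurningWith X C) {f : X → Y} {p : X}
    (hf : ContinuousAt f p) {l : Filter ι} {u : ι → X} (hu : Tendsto u l (𝓝 p)) :
    Tendsto (fun i => pullbackDist f (u i) p) l (𝓝 0) := by
  choose K hK huK hpK hKu using fun i => hbt (u i) p
  have h_dist : Tendsto (fun i => C * dist (u i) p) l (𝓝 0) := by
    simpa using (tendsto_iff_dist_tendsto_zero.1 hu).const_mul C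
  have h_diam : Tendsto (fun i => diam (K i)) l (𝓝 0) :=
    squeeze_zero (fun _ => diam_nonneg) hKu h_dist
  exact squeeze_zero (fun i => pullbackDist_nonneg f _ _)
    (fun i => pullbackDist_le_diam_image (hK i) (huK i) (hpK i))
    (tendsto_diam_image_of_tendsto_diam hf hpK (fun i => (hK i).1.isBounded) h_diam)

namespace IsQSControl

variable {η : ℝ → ℝ}

lemma map_zero (hη : IsQSControl η) : η 0 = 0 := by
  obtain ⟨t, ht, hηt⟩ := hη.2.2.2 (self_mem_Ici : (0 : ℝ) ∈ Ici 0)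
  exact le_antisymm (hηt ▸ hη.2.1.monotoneOn self_mem_Ici ht ht) (hη.2.2.1 self_mem_Ici)

lemma pos (hη : IsQSControl η) {s : ℝ} (hs : 0 < s) : 0 < η s := by
  simpa [hη.map_zero] using hη.2.1 self_mem_Ici (mem_Ici.2 hs.le) hs

end IsQSControl

namespace BranchedQS

variable {X Y : Type*} [PseudoMetricSpace X] [BoundedSpace X] [PseudoMetricSpace Y]
  {η : ℝ → ℝ} {f : X → Y}

lemma dist_le_mul_pullbackDist (hX : ContinuumConnected X) (hf : BranchedQS η f) (p q : X)
    {a z : X} {ε : ℝ} (hε : 0 < ε) (ha : ε ≤ dist a z) :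
    dist (f p) (f q) ≤ η (diam (univ : Set X) / ε) * pullbackDist f a z := by
  obtain ⟨hfc, hη, hqs⟩ := hf
  rcases eq_or_ne (f p) (f q) with hpq | hpq
  · rw [hpq, dist_self]
    exact mul_nonneg (hη.2.2.1 (div_nonneg diam_nonneg hε.le)) (pullbackDist_nonneg f a z)
  have h_univ : ∀ S : Set X, diam S ≤ diam (univ : Set X) := fun S =>
    diam_mono (subset_univ S) BoundedSpace.bounded_univ
  have hη_pos : 0 < η (diam (univ : Set X) / ε) :=
    hη.pos (div_pos (hε.trans_le (ha.trans (dist_le_diam_of_mem BoundedSpace.bounded_univ trivial trivial))) hε)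
  obtain ⟨M, hM, hzM, hpM, hqM⟩ := hX.exists_isContinuum_mem₃ z p q
  have hM_nt : M.Nontrivial := ⟨p, hpM, q, hqM, fun h => hpq (h ▸ rfl)⟩
  rw [← div_le_iff₀' hη_pos]
  refine le_pullbackDist (hX a z) fun K hK haK hzK => ?_
  rw [div_le_iff₀' hη_pos]
  have hK_diam : ε ≤ diam K := ha.trans (dist_le_diam_of_mem hK.1.isBounded haK hzK)
  have hK_nt : K.Nontrivial := ⟨a, haK, z, hzK, fun h => by subst h; simp at ha; linarith⟩
  have h_ratio : η (diam M / diam K) ≤ η (diam (univ : Set X) / ε) :=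
    hη.2.1.monotoneOn (div_nonneg diam_nonneg diam_nonneg) (div_nonneg diam_nonneg hε.le)
      (div_le_div₀ diam_nonneg (h_univ M) hε hK_diam)
  calc dist (f p) (f q) ≤ diam (f '' M) :=
        dist_le_diam_of_mem (hM.1.image hfc).isBounded (mem_image_of_mem f hpM)
          (mem_image_of_mem f hqM)
    _ ≤ η (diam M / diam K) * diam (f '' K) := hqs M K hM hK hM_nt hK_nt ⟨z, hzM, hzK⟩
    _ ≤ η (diam (univ : Set X) / ε) * diam (f '' K) :=
        mul_le_mul_of_nonneg_right h_ratio diam_nonneg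

end BranchedQS

section MetricSpace

variable {X Y : Type*} [MetricSpace X] [BoundedSpace X] [MetricSpace Y] {η : ℝ → ℝ} {f : X → Y}

lemma eq_of_pullbackDist_eq_zero (hX : ContinuumConnected X) (hf : BranchedQS η f)
    (hnc : ∃ p q : X, f p ≠ f q) {x y : X} (h : pullbackDist f x y = 0) : x = y := by
  obtain ⟨p, q, hpq⟩ := hnc
  by_contra hxy
  have := hf.dist_le_mul_pullbackDist hX p q (dist_pos.2 hxy) le_rfl
  rw [h, mul_zero] at this
  exact hpq (dist_le_zero.1 this)

lemma tendsto_of_tendsto_pullbackDist {ι : Type*} (hX : ContinuumConnected X)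
    (hf : BranchedQS η f) (hnc : ∃ p q : X, f p ≠ f q) {l : Filter ι} {u : ι → X} {x : X}
    (hu : Tendsto (fun i => pullbackDist f (u i) x) l (𝓝 0)) : Tendsto u l (𝓝 x) := by
  obtain ⟨p, q, hpq⟩ := hnc
  refine Metric.tendsto_nhds.2 fun ε hε => ?_
  have h_lim : Tendsto (fun i => η (diam (univ : Set X) / ε) * pullbackDist f (u i) x) l (𝓝 0) :=
    by simpa using hu.const_mul (η (diam (univ : Set X) / ε))
  filter_upwards [h_lim.eventually (gt_mem_nhds (dist_pos.2 hpq))] with i hi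
  by_contra! h
  exact hi.not_ge (hf.dist_le_mul_pullbackDist hX p q hε h)

end MetricSpace

theorem pullbackDist_is_metric_and_equivalent_general {X Y : Type*} [MetricSpace X] [CompactSpace X]
    [MetricSpace Y] (C : ℝ) (hbt : BoundedTurningWith X C)
    (η : ℝ → ℝ) (f : X → Y) (hf : BranchedQS η f) (hnc : ∃ p q : X, f p ≠ f q) :
    (∀ x : X, pullbackDist f x x = 0) ∧
      (∀ x y : X, pullbackDist f x y = pullbackDist f y x) ∧
      (∀ x y z : X, pullbackDist f x z ≤ pullbackDist f x y + pullbackDist f y z) ∧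
      (∀ x y : X, pullbackDist f x y = 0 → x = y) ∧
      ∀ (u : ℕ → X) (p : X),
        Filter.Tendsto u Filter.atTop (nhds p) ↔
          Filter.Tendsto (fun m => pullbackDist f (u m) p) Filter.atTop (nhds 0) := by
  have hX := hbt.continuumConnected
  exact ⟨pullbackDist_self f, pullbackDist_comm f, pullbackDist_triangle hX f,
    fun _ _ => eq_of_pullbackDist_eq_zero hX hf hnc,
    fun _ _ => ⟨tendsto_pullbackDist_of_tendsto hbt hf.1.continuousAt,
      tendsto_of_tendsto_pullbackDist hX hf hnc⟩⟩

/-- For a non-constant branched quasisymmetry `f` on a compact bounded turning space, the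
pullback distance `d_f` is a metric on `X` which is topologically equivalent to the original
metric (the identity map is a homeomorphism between the two). -/
theorem pullbackDist_is_metric_and_equivalent {X Y : Type*} [MetricSpace X] [CompactSpace X]
    [MetricSpace Y] (C : ℝ) (hC : 1 ≤ C) (hbt : BoundedTurningWith X C)
    (η : ℝ → ℝ) (f : X → Y) (hf : BranchedQS η f) (hnc : ∃ p q : X, f p ≠ f q) :
    (∀ x : X, pullbackDist f x x = 0) ∧
      (∀ x y : X, pullbackDist f x y = pullbackDist f y x) ∧
      (∀ x y z : X, pullbackDist f x z ≤ pullbackDist f x y + pullbackDist f y z) ∧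
      (∀ x y : X, pullbackDist f x y = 0 → x = y) ∧
      ∀ (u : ℕ → X) (p : X),
        Filter.Tendsto u Filter.atTop (nhds p) ↔
          Filter.Tendsto (fun m => pullbackDist f (u m) p) Filter.atTop (nhds 0) :=
  pullbackDist_is_metric_and_equivalent_general C hbt η f hf hnc
end

section
/- Let X be a bounded turning metric space, Y a metric space, and f : X → Y a map. Then f is Lipschitz light if and only if there is a constant c ≥ 1 such that c^{-1}·diam(K) ≤ diam(f(K)) ≤ c·diam(K) for every continuum K ⊆ X. Moreover, the constant in each of the two conditions can be bounded in terms of the constant in the other and the bounded turning constant of X. -/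
open Metric Set
open scoped ENNReal NNReal

/-! If `f` is `L`-Lipschitz light and `K` is a continuum, then `K` lies in one `r`-component of
`f ⁻¹' (f '' K)` for every `r > diam (f '' K)`, so `diam K ≤ L * diam (f '' K)`. Conversely, bounded
turning fills an `r`-path by a chain of small continua; comparability of diameters on continua
makes `f` Lipschitz, keeps the image of that chain within `O(r)` of the image of the path, and so
bounds the diameter of the chain, hence the distance of the endpoints, by `O(r)`. -/

def PreservesContinuumDiamWith {X Y : Type*} [PseudoMetricSpace X] [PseudoMetricSpace Y]
    (c : ℝ) (f : X → Y) : Prop :=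
  ∀ K : Set X, IsContinuum K →
    c⁻¹ * Metric.diam K ≤ Metric.diam (f '' K) ∧ Metric.diam (f '' K) ≤ c * Metric.diam K

section RComponent

variable {X : Type*} [PseudoMetricSpace X] {r : ℝ} {S T : Set X} {x y z : X}

lemma SameRComponent.refl_s17 (hx : x ∈ S) : SameRComponent r S x x :=
  ⟨[x], ⟨by simpa using hx, List.isChain_singleton _⟩, rfl, rfl⟩

lemma SameRComponent.mono_s17 (hST : S ⊆ T) (h : SameRComponent r S x y) :
    SameRComponent r T x y := by
  obtain ⟨l, ⟨hmem, hchain⟩, hhead, hlast⟩ := h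
  exact ⟨l, ⟨fun z hz => hST (hmem z hz), hchain⟩, hhead, hlast⟩

lemma SameRComponent.snoc (h : SameRComponent r S x y) (hz : z ∈ S) (hyz : dist y z ≤ r) :
    SameRComponent r S x z := by
  obtain ⟨l, ⟨hmem, hchain⟩, hhead, hlast⟩ := h
  have hne : l ≠ [] := by rintro rfl; simp at hhead
  refine ⟨l ++ [z], ⟨?_, ?_⟩, by rw [List.head?_append_of_ne_nil _ hne, hhead], by simp⟩
  · simp only [List.mem_append, List.mem_singleton]
    rintro w (hw | rfl)
    exacts [hmem w hw, hz]
  · refine List.isChain_append.2 ⟨hchain, List.isChain_singleton _, ?_⟩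
    rw [hlast]
    simpa using hyz

lemma IsPreconnected.sameRComponent {K : Set X} (hK : IsPreconnected K) (hr : 0 < r)
    (hx : x ∈ K) (hy : y ∈ K) : SameRComponent r K x y := by
  by_contra hxy
  -- the `r`-balls around the `r`-component of `x` in `K` and around the rest of `K` separate `K`
  let U : Set X := ⋃ a ∈ {a ∈ K | SameRComponent r K x a}, ball a r
  let V : Set X := ⋃ a ∈ {a ∈ K | ¬ SameRComponent r K x a}, ball a r
  have hcover : K ⊆ U ∪ V := by
    intro z hz
    by_cases h : SameRComponent r K x z
    · exact Or.inl (mem_biUnion ⟨hz, h⟩ (mem_ball_self hr))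
    · exact Or.inr (mem_biUnion ⟨hz, h⟩ (mem_ball_self hr))
  obtain ⟨z, hzK, hzU, hzV⟩ := hK U V (isOpen_biUnion fun _ _ => isOpen_ball)
    (isOpen_biUnion fun _ _ => isOpen_ball) hcover
    ⟨x, hx, mem_biUnion ⟨hx, .refl hx⟩ (mem_ball_self hr)⟩
    ⟨y, hy, mem_biUnion ⟨hy, hxy⟩ (mem_ball_self hr)⟩
  obtain ⟨a, ⟨-, hxa⟩, haz⟩ := mem_iUnion₂.1 hzU
  obtain ⟨b, ⟨hbK, hxb⟩, hbz⟩ := mem_iUnion₂.1 hzV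
  exact hxb ((hxa.snoc hzK (mem_ball'.1 haz).le).snoc hbK (mem_ball.1 hbz).le)

end RComponent

section LipschitzLight

variable {X Y : Type*} [PseudoMetricSpace X] [PseudoMetricSpace Y] {L : ℝ} {f : X → Y}

lemma LipschitzLightWith.diam_image_le (hf : LipschitzLightWith L f) (hL : 0 ≤ L) {K : Set X}
    (hK : Bornology.IsBounded K) : Metric.diam (f '' K) ≤ L * Metric.diam K := by
  simpa [Real.coe_toNNReal L hL] using (LipschitzWith.of_dist_le' hf.1).diam_image_le K hK

lemma LipschitzLightWith.diam_le_mul_diam_image (hf : LipschitzLightWith L f) (hL : 0 < L)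
    {K : Set X} (hK : IsPreconnected K) (hfK : Bornology.IsBounded (f '' K)) :
    Metric.diam K ≤ L * Metric.diam (f '' K) := by
  refine diam_le_of_forall_dist_le (by positivity) fun x hx y hy => ?_
  rw [← div_le_iff₀' hL]
  refine le_of_forall_gt_imp_ge_of_dense fun r hr => ?_
  have hr0 : 0 < r := diam_nonneg.trans_lt hr
  have hW : ediam (f '' K) ≤ ENNReal.ofReal r :=
    ediam_le_of_forall_dist_le fun u hu v hv => (dist_le_diam_of_mem hfK hu hv).trans hr.le
  rw [div_le_iff₀' hL]
  exact hf.2 r hr0 (f '' K) hW x y ((hK.sameRComponent hr0 hx hy).mono_s17 (subset_preimage_image f K))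

lemma LipschitzLightWith.preservesContinuumDiamWith (hf : LipschitzLightWith L f) (hL : 0 < L) :
    PreservesContinuumDiamWith (max L 1) f := by
  intro K hK
  have hmax : 0 < max L 1 := lt_max_of_lt_right one_pos
  constructor
  · rw [inv_mul_le_iff₀ hmax]
    calc Metric.diam K ≤ L * Metric.diam (f '' K) :=
          hf.diam_le_mul_diam_image hL hK.2.isPreconnected ((hK.1.image_of_continuousOn
            (LipschitzWith.of_dist_le' hf.1).continuous.continuousOn).isBounded)
      _ ≤ max L 1 * Metric.diam (f '' K) := by gcongr; exact le_max_left _ _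
  · calc Metric.diam (f '' K) ≤ L * Metric.diam K := hf.diam_image_le hL.le hK.1.isBounded
      _ ≤ max L 1 * Metric.diam K := by gcongr; exact le_max_left _ _

end LipschitzLight

section BoundedTurning

variable {X : Type*} [PseudoMetricSpace X] {C r : ℝ}

/-- `K` is the union of bounded-turning continua of consecutive points of `l`. -/
lemma BoundedTurningWith.exists_continuum_of_isChain (hX : BoundedTurningWith X C)
    (hC : 0 ≤ C) (hr : 0 ≤ r) {l : List X} (hl : l.IsChain (fun a b => dist a b ≤ r)) {x y : X}
    (hx : l.head? = some x) (hy : l.getLast? = some y) :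
    ∃ K : Set X, IsContinuum K ∧ x ∈ K ∧ y ∈ K ∧ ∀ w ∈ K, ∃ z ∈ l, ∃ K' : Set X,
      IsContinuum K' ∧ w ∈ K' ∧ z ∈ K' ∧ Metric.diam K' ≤ C * r := by
  induction l generalizing x with
  | nil => simp at hx
  | cons a t ih =>
    obtain rfl : a = x := by simpa using hx
    cases t with
    | nil =>
      obtain rfl : a = y := by simpa using hy
      have hsingle : IsContinuum {a} := ⟨isCompact_singleton, isConnected_singleton⟩
      refine ⟨{a}, hsingle, rfl, rfl, fun w hw => ⟨a, List.mem_singleton_self a, {a}, hsingle,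
        hw, rfl, by simpa using mul_nonneg hC hr⟩⟩
    | cons b t =>
      obtain ⟨hab, ht⟩ := List.isChain_cons_cons.1 hl
      obtain ⟨K, hK, hbK, hyK, hKpath⟩ := ih ht rfl (by simpa using hy)
      obtain ⟨K₀, hK₀, haK₀, hbK₀, hdiam⟩ := hX a b
      refine ⟨K₀ ∪ K, ⟨hK₀.1.union hK.1, hK₀.2.union ⟨b, hbK₀, hbK⟩ hK.2⟩, .inl haK₀, .inr hyK,
        ?_⟩
      rintro w (hw | hw)
      · exact ⟨a, List.mem_cons_self, K₀, hK₀, hw, haK₀, hdiam.trans (by gcongr)⟩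
      · obtain ⟨z, hz, hzw⟩ := hKpath w hw
        exact ⟨z, List.mem_cons_of_mem _ hz, hzw⟩

end BoundedTurning

section PreservesContinuumDiam

variable {X Y : Type*} [MetricSpace X] [PseudoMetricSpace Y] {c : ℝ} {f : X → Y}

lemma PreservesContinuumDiamWith.isBounded_image (hf : PreservesContinuumDiamWith c f)
    (hc : 0 < c) {K : Set X} (hK : IsContinuum K) : Bornology.IsBounded (f '' K) := by
  by_contra hunb
  rcases K.subsingleton_or_nontrivial with hs | hs
  · exact hunb (hs.image f).finite.isBounded
  · have hpos : 0 < c⁻¹ * Metric.diam K := by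
      have := diam_pos hs hK.1.isBounded
      positivity
    have := (hf K hK).1
    rw [diam_eq_zero_of_unbounded hunb] at this
    linarith

lemma PreservesContinuumDiamWith.dist_le (hf : PreservesContinuumDiamWith c f) (hc : 0 < c)
    {K : Set X} (hK : IsContinuum K) {u v : X} (hu : u ∈ K) (hv : v ∈ K) :
    dist (f u) (f v) ≤ c * Metric.diam K :=
  (dist_le_diam_of_mem (hf.isBounded_image hc hK) (mem_image_of_mem f hu)
    (mem_image_of_mem f hv)).trans (hf K hK).2

lemma PreservesContinuumDiamWith.diam_le (hf : PreservesContinuumDiamWith c f) (hc : 0 < c)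
    {K : Set X} (hK : IsContinuum K) : Metric.diam K ≤ c * Metric.diam (f '' K) :=
  (inv_mul_le_iff₀ hc).1 (hf K hK).1

variable {C : ℝ}

lemma PreservesContinuumDiamWith.dist_le_of_boundedTurning (hf : PreservesContinuumDiamWith c f)
    (hc : 0 < c) (hX : BoundedTurningWith X C) (x y : X) :
    dist (f x) (f y) ≤ c * C * dist x y := by
  obtain ⟨K, hK, hx, hy, hdiam⟩ := hX x y
  calc dist (f x) (f y) ≤ c * Metric.diam K := hf.dist_le hc hK hx hy
    _ ≤ c * C * dist x y := by rw [mul_assoc]; gcongr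

/-- The continuum through the path given by `exists_continuum_of_isChain` maps within `c * C * r`
of `f '' l ⊆ W`, so its image has diameter at most `(2 * c * C + 1) * r`. -/
lemma PreservesContinuumDiamWith.dist_le_of_sameRComponent (hf : PreservesContinuumDiamWith c f)
    (hc : 0 < c) (hX : BoundedTurningWith X C) (hC : 0 ≤ C) {r : ℝ} (hr : 0 < r) {W : Set Y}
    (hW : ediam W ≤ ENNReal.ofReal r) {x y : X} (hxy : SameRComponent r (f ⁻¹' W) x y) :
    dist x y ≤ c * (2 * c * C + 1) * r := by
  obtain ⟨l, ⟨hlW, hl⟩, hx, hy⟩ := hxy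
  obtain ⟨K, hK, hxK, hyK, hKpath⟩ := hX.exists_continuum_of_isChain hC hr.le hl hx hy
  have hnear : ∀ w ∈ K, ∃ z ∈ l, dist (f w) (f z) ≤ c * (C * r) := by
    intro w hw
    obtain ⟨z, hz, K', hK', hwK', hzK', hdiam⟩ := hKpath w hw
    exact ⟨z, hz, (hf.dist_le hc hK' hwK' hzK').trans (by gcongr)⟩
  have hpath : ∀ z₁ ∈ l, ∀ z₂ ∈ l, dist (f z₁) (f z₂) ≤ r := fun z₁ h₁ z₂ h₂ =>
    (edist_le_ofReal hr.le).1 ((edist_le_ediam_of_mem (show f z₁ ∈ W from hlW z₁ h₁)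
      (show f z₂ ∈ W from hlW z₂ h₂)).trans hW)
  have himage : Metric.diam (f '' K) ≤ (2 * c * C + 1) * r := by
    refine diam_le_of_forall_dist_le (by positivity) ?_
    rintro _ ⟨w₁, hw₁, rfl⟩ _ ⟨w₂, hw₂, rfl⟩
    obtain ⟨z₁, hz₁, h₁⟩ := hnear w₁ hw₁
    obtain ⟨z₂, hz₂, h₂⟩ := hnear w₂ hw₂
    calc dist (f w₁) (f w₂) ≤ dist (f w₁) (f z₁) + dist (f z₁) (f z₂) + dist (f w₂) (f z₂) := by
          rw [dist_comm (f w₂)]; exact dist_triangle4 _ _ _ _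
      _ ≤ c * (C * r) + r + c * (C * r) := by gcongr; exact hpath z₁ hz₁ z₂ hz₂
      _ = (2 * c * C + 1) * r := by ring
  calc dist x y ≤ Metric.diam K := dist_le_diam_of_mem hK.1.isBounded hxK hyK
    _ ≤ c * Metric.diam (f '' K) := hf.diam_le hc hK
    _ ≤ c * ((2 * c * C + 1) * r) := by gcongr
    _ = c * (2 * c * C + 1) * r := by ring

lemma PreservesContinuumDiamWith.lipschitzLightWith (hf : PreservesContinuumDiamWith c f)
    (hc : 1 ≤ c) (hX : BoundedTurningWith X C) (hC : 0 ≤ C) :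
    LipschitzLightWith (c * (2 * c * C + 1)) f := by
  have hc0 : 0 < c := one_pos.trans_le hc
  refine ⟨fun x y => (hf.dist_le_of_boundedTurning hc0 hX x y).trans ?_,
    fun r hr W hW x y => hf.dist_le_of_sameRComponent hc0 hX hC hr hW⟩
  have : C ≤ 2 * c * C + 1 := by nlinarith
  gcongr

end PreservesContinuumDiam

/-- On a bounded turning space, a map is Lipschitz light iff it roughly preserves the
diameters of continua; moreover the constant in each condition is bounded in terms of the
constant in the other and the bounded turning constant. -/
theorem lipschitzLight_iff_continuum_diam (Cbt : ℝ) (hCbt : 1 ≤ Cbt) :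
    (∀ L : ℝ, 0 < L → ∃ c : ℝ, 1 ≤ c ∧
      ∀ (X Y : Type) [MetricSpace X] [MetricSpace Y], BoundedTurningWith X Cbt →
        ∀ f : X → Y, LipschitzLightWith L f → ∀ K : Set X, IsContinuum K →
          c⁻¹ * Metric.diam K ≤ Metric.diam (f '' K) ∧
            Metric.diam (f '' K) ≤ c * Metric.diam K) ∧
    ∀ c : ℝ, 1 ≤ c → ∃ L : ℝ, 0 < L ∧
      ∀ (X Y : Type) [MetricSpace X] [MetricSpace Y], BoundedTurningWith X Cbt →
        ∀ f : X → Y,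
          (∀ K : Set X, IsContinuum K →
            c⁻¹ * Metric.diam K ≤ Metric.diam (f '' K) ∧
              Metric.diam (f '' K) ≤ c * Metric.diam K) →
          LipschitzLightWith L f := by
  refine ⟨fun L hL => ⟨max L 1, le_max_right _ _, fun X Y _ _ _ f hf =>
    hf.preservesContinuumDiamWith hL⟩, fun c hc => ?_⟩
  have hc0 : 0 < c := one_pos.trans_le hc
  exact ⟨c * (2 * c * Cbt + 1), by positivity, fun X Y _ _ hX f hf =>
    PreservesContinuumDiamWith.lipschitzLightWith hf hc hX (zero_le_one.trans hCbt)⟩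
end
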